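/- The Demazure operators T_i on ℂ[x₁,...,x_n], defined by T_i(f) = (f - s_i(f))/(x_i - x_{i+1}) where s_i swaps x_i and x_{i+1}, satisfy the braid relation T_i T_{i+1} T_i = T_{i+1} T_i T_{i+1} and commute when |i - j| > 1. -/

import Mathlib

/-!
Abstractly, `T_i` is a divided difference `a * D f = f - s f` for a ring involution `s` negating
`a`; such a `D` takes values in the `s`-invariants and is linear over them. With
`a = x_i - x_{i+1}`, `b = x_{i+1} - x_{i+2}` and `c = x_i - x_{i+2} = a + b`, these two facts
expand `a b c · T_i T_{i+1} T_i f` into the alternating sum `∑_{w ∈ S₃} sign(w) w(f)`. The data is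
symmetric under exchanging `(s_i, a)` with `(s_{i+1}, b)`, so `a b c · T_{i+1} T_i T_{i+1} f` is the
same sum written with `s_{i+1} s_i s_{i+1}` in place of `s_i s_{i+1} s_i`, and the braid relation
of the transpositions identifies the two. Far-apart operators commute because `s_i` commutes
with `T_j` and `T_j` is linear over the `s_j`-invariant `x_i - x_{i+1}`.
-/

open MvPolynomial Function

namespace DivDiff

variable {R F : Type*} [CommRing R] [IsDomain R] [FunLike F R R] [RingHomClass F R R]

theorem map_apply_eq {s : F} {a : R} {D : R → R} (hs : Involutive s) (ha : a ≠ 0)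
    (hsa : s a = -a) (hD : ∀ f, a * D f = f - s f) (f : R) : s (D f) = D f := by
  apply mul_left_cancel₀ ha
  calc a * s (D f) = -s (a * D f) := by rw [map_mul, hsa, neg_mul, neg_neg]
    _ = a * D f := by rw [hD, map_sub, hs, neg_sub]

theorem apply_mul_of_map_eq {s : F} {a g : R} {D : R → R} (ha : a ≠ 0)
    (hD : ∀ f, a * D f = f - s f) (hg : s g = g) (f : R) : D (g * f) = g * D f := by
  apply mul_left_cancel₀ ha
  rw [hD, map_mul, hg, mul_left_comm, hD, mul_sub]

theorem map_apply_comm {s t : F} {a : R} {D : R → R} (ha : a ≠ 0)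
    (hD : ∀ f, a * D f = f - s f) (hst : ∀ f, s (t f) = t (s f)) (hta : t a = a) (f : R) :
    t (D f) = D (t f) := by
  apply mul_left_cancel₀ ha
  rw [hD, ← hta, ← map_mul, hD, map_sub, hst]

theorem apply_comm {G : Type*} [FunLike G R R] [AddMonoidHomClass G R R]
    {s t : F} {a b : R} {D : R → R} {E : G} (ha : a ≠ 0) (hb : b ≠ 0)
    (hD : ∀ f, a * D f = f - s f) (hE : ∀ f, b * E f = f - t f)
    (hst : ∀ f, s (t f) = t (s f)) (hsb : s b = b) (hta : t a = a) (f : R) :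
    D (E f) = E (D f) := by
  apply mul_left_cancel₀ ha
  calc a * D (E f) = E f - E (s f) := by
        rw [hD, map_apply_comm hb hE (fun f => (hst f).symm) hsb]
    _ = E (a * D f) := by rw [hD, map_sub]
    _ = a * E (D f) := apply_mul_of_map_eq hb hE hta (D f)

theorem mul_apply_apply_apply {s t : F} {a b c : R} {D E : R → R} (hs : Involutive s)
    (ha : a ≠ 0) (hsa : s a = -a) (hsb : s b = c) (hta : t a = c) (habc : a + b = c)
    (hD : ∀ f, a * D f = f - s f) (hE : ∀ f, b * E f = f - t f) (f : R) :
    a * b * c * D (E (D f)) = f - s f - t f + s (t f) + t (s f) - s (t (s f)) := by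
  have hsc : s c = b := by rw [← hsb, hs]
  have hsDf : s (D f) = D f := map_apply_eq hs ha hsa hD f
  have h₁ : c * s (E (D f)) = D f - s (t (D f)) := by rw [← hsb, ← map_mul, hE, map_sub, hsDf]
  have h₂ : c * t (D f) = t f - t (s f) := by rw [← hta, ← map_mul, hD, map_sub]
  have h₃ : b * s (t (D f)) = s (t f) - s (t (s f)) := by rw [← hsc, ← map_mul, h₂, map_sub]
  linear_combination b * c * hD (E (D f)) + c * hE (D f) - b * h₁ - h₂ + h₃ + hD f - D f * habc

theorem braid {s t : F} {a b c : R} {D E : R → R} (hs : Involutive s) (ht : Involutive t)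
    (ha : a ≠ 0) (hb : b ≠ 0) (hsa : s a = -a) (htb : t b = -b) (hsb : s b = c) (hta : t a = c)
    (habc : a + b = c) (hD : ∀ f, a * D f = f - s f) (hE : ∀ f, b * E f = f - t f)
    (hsts : ∀ f, s (t (s f)) = t (s (t f))) (f : R) :
    D (E (D f)) = E (D (E f)) := by
  have hc : c ≠ 0 := hsb ▸ (map_ne_zero_iff s hs.injective).mpr hb
  apply mul_left_cancel₀ (mul_ne_zero (mul_ne_zero ha hb) hc)
  rw [mul_apply_apply_apply hs ha hsa hsb hta habc hD hE,
    mul_comm a b, mul_apply_apply_apply ht hb htb hta hsb (by rw [add_comm, habc]) hE hD, hsts]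
  ring

end DivDiff

namespace MvPolynomial

variable {R τ : Type*} [CommRing R]

theorem rename_involutive {σ : τ → τ} (hσ : Involutive σ) :
    Involutive (rename σ : MvPolynomial τ R → MvPolynomial τ R) := fun f => by
  rw [rename_rename, hσ.comp_self, rename_id_apply]

theorem rename_comm {σ ρ : τ → τ} (h : σ ∘ ρ = ρ ∘ σ) (f : MvPolynomial τ R) :
    rename σ (rename ρ f) = rename ρ (rename σ f) := by
  rw [rename_rename, rename_rename, h]

theorem X_sub_X_ne_zero [Nontrivial R] {i j : τ} (h : i ≠ j) :
    (X i - X j : MvPolynomial τ R) ≠ 0 :=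
  sub_ne_zero.mpr (X_injective.ne h)

theorem rename_swap_braid (i : ℕ) (f : MvPolynomial ℕ R) :
    rename (Equiv.swap i (i + 1)) (rename (Equiv.swap (i + 1) (i + 2))
        (rename (Equiv.swap i (i + 1)) f)) =
      rename (Equiv.swap (i + 1) (i + 2)) (rename (Equiv.swap i (i + 1))
        (rename (Equiv.swap (i + 1) (i + 2)) f)) := by
  simp only [rename_rename]
  congr 2
  ext x
  simp only [comp, Equiv.swap_apply_def]
  split_ifs <;> omega

end MvPolynomial

/-- The Demazure operators `T_i` on `ℂ[x₀,x₁,…]`, characterized by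
`(x_i - x_{i+1})·T_i(f) = f - s_i(f)` where `s_i` swaps `x_i` and `x_{i+1}`,
satisfy the braid relation `T_i T_{i+1} T_i = T_{i+1} T_i T_{i+1}` and commute
when `|i - j| > 1`. -/
theorem demazure_braid_relations
    (T : ℕ → (MvPolynomial ℕ ℂ →ₗ[ℂ] MvPolynomial ℕ ℂ))
    (hT : ∀ (i : ℕ) (f : MvPolynomial ℕ ℂ),
      (X i - X (i + 1)) * T i f = f - rename (Equiv.swap i (i + 1)) f) :
    (∀ (i : ℕ) (f : MvPolynomial ℕ ℂ),
      T i (T (i + 1) (T i f)) = T (i + 1) (T i (T (i + 1) f))) ∧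
    (∀ (i j : ℕ), (i + 1 < j ∨ j + 1 < i) →
      ∀ f : MvPolynomial ℕ ℂ, T i (T j f) = T j (T i f)) := by
  have hs (i : ℕ) : Involutive (rename (Equiv.swap i (i + 1)) : MvPolynomial ℕ ℂ → _) :=
    rename_involutive (Equiv.swap_apply_self i (i + 1))
  have hne (i : ℕ) : (X i - X (i + 1) : MvPolynomial ℕ ℂ) ≠ 0 := X_sub_X_ne_zero (by omega)
  refine ⟨fun i f => ?_, fun i j hij f => ?_⟩
  · refine DivDiff.braid (c := X i - X (i + 2)) (hs i) (hs (i + 1)) (hne i) (hne (i + 1))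
      ?_ ?_ ?_ ?_ (by ring) (hT i) (hT (i + 1)) (rename_swap_braid i) f <;>
    simp [Equiv.swap_apply_def] <;> omega
  · refine DivDiff.apply_comm (hne i) (hne j) (hT i) (hT j) (rename_comm ?_) ?_ ?_ f
    · ext x
      simp only [comp, Equiv.swap_apply_def]
      split_ifs <;> omega
    all_goals
      rw [map_sub, rename_X, rename_X, Equiv.swap_apply_of_ne_of_ne, Equiv.swap_apply_of_ne_of_ne]
      all_goals omega
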